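/- Let (Hc(t))_{c ∈ C, t ∈ ℕ} be nonnegative random processes on a finite index set C, and suppose there exist constants K > 0, ε > 0, and V ≥ 0 and a bounded sequence of expected costs with Δ(t) + V·E[C^MDPP(t) | H(t)] ≤ K + V·E[C^S(t)] − ε·Σ_c H_c(t) for all t, where Δ(t) = E[L(H(t+1)) − L(H(t)) | H(t)] and L(H) = (1/2)Σ_c λ_c H_c² with λ_c > 0, E[L(H(0))] < ∞, and lim_{T→∞}(1/T)Σ_{t=0}^{T-1} E[C^S(t)] = C̄ < ∞, and C^MDPP(t) ≥ C^min for all t. Then limsup_{T→∞} (1/T)Σ_{t=0}^{T-1} Σ_c E[H_c(t)] ≤ (K + V(C̄ − C^min))/ε. -/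

import Mathlib

/-!
Summing the drift inequality over `t < T` telescopes the Lyapunov terms to `E[L(H(T))] - E[L(H(0))]`.
Dropping `E[L(H(T))] ≥ 0`, bounding the MDPP cost below by `C^min` and dividing by `T ε` bounds the
time-averaged backlog by `(E[L(H(0))] / T + K + V (avg C^S - C^min)) / ε`, whose limit is the claimed bound.
-/

open Filter Finset Topology

noncomputable def cesaroMean (u : ℕ → ℝ) (T : ℕ) : ℝ :=
  (T : ℝ)⁻¹ * ∑ t ∈ range T, u t

lemma cesaroMean_add (u v : ℕ → ℝ) (T : ℕ) :
    cesaroMean (fun t => u t + v t) T = cesaroMean u T + cesaroMean v T := by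
  simp only [cesaroMean, sum_add_distrib, mul_add]

lemma cesaroMean_const_mul (a : ℝ) (u : ℕ → ℝ) (T : ℕ) :
    cesaroMean (fun t => a * u t) T = a * cesaroMean u T := by
  simp only [cesaroMean, ← mul_sum]
  ring

lemma cesaroMean_nonneg {u : ℕ → ℝ} (hu : ∀ t, 0 ≤ u t) (T : ℕ) : 0 ≤ cesaroMean u T :=
  mul_nonneg (by positivity) (sum_nonneg fun t _ => hu t)

lemma sum_range_le_of_drift {L a b : ℕ → ℝ} (hdrift : ∀ t, L (t + 1) - L t + a t ≤ b t)
    (T : ℕ) (hLT : 0 ≤ L T) : ∑ t ∈ range T, a t ≤ L 0 + ∑ t ∈ range T, b t := by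
  have hsum := sum_le_sum fun t (_ : t ∈ range T) => hdrift t
  rw [sum_add_distrib, sum_range_sub L T] at hsum
  linarith

lemma cesaroMean_le_of_drift {ε : ℝ} (hε : 0 < ε) {L a b : ℕ → ℝ} (hL : ∀ t, 0 ≤ L t)
    (hdrift : ∀ t, L (t + 1) - L t + ε * a t ≤ b t) (T : ℕ) :
    cesaroMean a T ≤ ((T : ℝ)⁻¹ * L 0 + cesaroMean b T) / ε := by
  have hsum : ε * ∑ t ∈ range T, a t ≤ L 0 + ∑ t ∈ range T, b t := by
    rw [mul_sum]
    exact sum_range_le_of_drift hdrift T (hL T)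
  rw [le_div_iff₀ hε, cesaroMean, cesaroMean, ← mul_add]
  calc (T : ℝ)⁻¹ * (∑ t ∈ range T, a t) * ε = (T : ℝ)⁻¹ * (ε * ∑ t ∈ range T, a t) := by ring
    _ ≤ (T : ℝ)⁻¹ * (L 0 + ∑ t ∈ range T, b t) := by gcongr

lemma limsup_cesaroMean_le_of_drift {ε l : ℝ} (hε : 0 < ε) {L a b : ℕ → ℝ} (hL : ∀ t, 0 ≤ L t)
    (ha : ∀ t, 0 ≤ a t) (hdrift : ∀ t, L (t + 1) - L t + ε * a t ≤ b t)
    (hb : Tendsto (cesaroMean b) atTop (𝓝 l)) :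
    limsup (cesaroMean a) atTop ≤ l / ε := by
  have hbound : Tendsto (fun T : ℕ => ((T : ℝ)⁻¹ * L 0 + cesaroMean b T) / ε) atTop
      (𝓝 ((0 * L 0 + l) / ε)) :=
    ((tendsto_inv_atTop_nhds_zero_nat.mul_const (L 0)).add hb).div_const ε
  rw [zero_mul, zero_add] at hbound
  calc limsup (cesaroMean a) atTop
      ≤ limsup (fun T : ℕ => ((T : ℝ)⁻¹ * L 0 + cesaroMean b T) / ε) atTop :=
        limsup_le_limsup (Eventually.of_forall (cesaroMean_le_of_drift hε hL hdrift))
          (isCoboundedUnder_le_of_le atTop (cesaroMean_nonneg ha)) hbound.isBoundedUnder_le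
    _ = l / ε := hbound.limsup_eq

/-- `EL t`, `EH t c`, `ECm t`, `ECs t` stand for E[L(H(t))], E[H_c(t)], E[C^MDPP(t)], E[C^S(t)];
`hdrift` is the drift condition after taking expectations. -/
theorem mdpp_waiting_time_bound_general {C : Type*} [Fintype C]
    (K ε V Cbar Cmin : ℝ) (hε : 0 < ε) (hV : 0 ≤ V)
    (EL : ℕ → ℝ) (EH : ℕ → C → ℝ) (ECm ECs : ℕ → ℝ)
    (hELnonneg : ∀ t, 0 ≤ EL t)
    (hEHnonneg : ∀ t c, 0 ≤ EH t c)
    (hdrift : ∀ t, EL (t + 1) - EL t + V * ECm t ≤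
      K + V * ECs t - ε * ∑ c, EH t c)
    (hCs : Tendsto (fun T : ℕ => (T : ℝ)⁻¹ * ∑ t ∈ Finset.range T, ECs t)
      atTop (nhds Cbar))
    (hCmin : ∀ t, Cmin ≤ ECm t) :
    limsup (fun T : ℕ => (T : ℝ)⁻¹ * ∑ t ∈ Finset.range T, ∑ c, EH t c) atTop
      ≤ (K + V * (Cbar - Cmin)) / ε := by
  have hdrift_cost : ∀ t, EL (t + 1) - EL t + ε * ∑ c, EH t c ≤ (K - V * Cmin) + V * ECs t :=
    fun t => by linarith [mul_le_mul_of_nonneg_left (hCmin t) hV, hdrift t]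
  have hcost : Tendsto (cesaroMean fun t => (K - V * Cmin) + V * ECs t) atTop
      (𝓝 ((K - V * Cmin) + V * Cbar)) := by
    simp only [funext (cesaroMean_add _ _), funext (cesaroMean_const_mul _ _)]
    exact tendsto_const_nhds.cesaro.add (hCs.const_mul V)
  calc limsup (cesaroMean fun t => ∑ c, EH t c) atTop ≤ ((K - V * Cmin) + V * Cbar) / ε :=
        limsup_cesaroMean_le_of_drift hε hELnonneg (fun t => sum_nonneg fun c _ => hEHnonneg t c)
          hdrift_cost hcost
    _ = (K + V * (Cbar - Cmin)) / ε := by ring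

/-- Lyapunov drift-plus-penalty telescoping bound on time-averaged expected
waiting times (Theorem 1(ii)).  `EL t` denotes E[L(H(t))], `EH t c` denotes
E[H_c(t)], and `ECm t`, `ECs t` denote the expected MDPP and S-only dispatch
costs at time t.  The drift hypothesis is the expectation of
Δ(t) + V·E[C^MDPP(t)|H(t)] ≤ K + V·E[C^S(t)] − ε·Σ_c H_c(t). -/
theorem mdpp_waiting_time_bound {C : Type*} [Fintype C]
    (K ε V Cbar Cmin : ℝ) (hK : 0 < K) (hε : 0 < ε) (hV : 0 ≤ V)
    (lam : C → ℝ) (hlam : ∀ c, 0 < lam c)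
    (EL : ℕ → ℝ) (EH : ℕ → C → ℝ) (ECm ECs : ℕ → ℝ)
    (hELnonneg : ∀ t, 0 ≤ EL t)
    (hEHnonneg : ∀ t c, 0 ≤ EH t c)
    (hdrift : ∀ t, EL (t + 1) - EL t + V * ECm t ≤
      K + V * ECs t - ε * ∑ c, EH t c)
    (hCs : Tendsto (fun T : ℕ => (T : ℝ)⁻¹ * ∑ t ∈ Finset.range T, ECs t)
      atTop (nhds Cbar))
    (hCmin : ∀ t, Cmin ≤ ECm t) :
    limsup (fun T : ℕ => (T : ℝ)⁻¹ * ∑ t ∈ Finset.range T, ∑ c, EH t c) atTop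
      ≤ (K + V * (Cbar - Cmin)) / ε :=
  mdpp_waiting_time_bound_general K ε V Cbar Cmin hε hV EL EH ECm ECs hELnonneg hEHnonneg hdrift hCs
    hCmin
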